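/- Let μ : Σ → Σ* be a morphism prolongable on a ∈ Σ with infinite fixed point μ^ω(a) = y₀y₁y₂⋯, and let S be the abstract numeration system built on the directive language L_{μ,a} of (μ,a) with the ordered alphabet ({0,…,r_μ−1}, 0<⋯<r_μ−1). Let n ≥ 1 and write rep_S(n) = w₀w₁⋯w_ℓ with each w_j a digit. Define the finite words z₀ := μ(a) and z_{j+1} := μ((z_j)_{w_j}) for j = 0,…,ℓ−1, where (z_j)_{w_j} denotes the letter of z_j at position w_j. Then y_n = (z_ℓ)_{w_ℓ}. -/

import Mathlib

/-- Application of a morphism (letter-to-word map) to a word. -/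
def applyMorphism {σ : Type*} (μ : σ → List σ) (w : List σ) : List σ :=
  (w.map μ).flatten

/-- `morphIter μ a k` is the word `μ^k(a)`. -/
def morphIter {σ : Type*} (μ : σ → List σ) (a : σ) (k : ℕ) : List σ :=
  (applyMorphism μ)^[k] [a]

/-- `μ` is prolongable on `a`: `μ(a)` begins with the letter `a`. -/
def Prolongable {σ : Type*} (μ : σ → List σ) (a : σ) : Prop :=
  ∃ u, μ a = a :: u

/-- `y : ℕ → σ` is the infinite fixed point `μ^ω(a)`: every iterate `μ^k(a)` is a
prefix of `y`, and the lengths of the iterates are unbounded. -/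
def IsOmegaFixedPoint {σ : Type*} (μ : σ → List σ) (a : σ) (y : ℕ → σ) : Prop :=
  (∀ k n, n < (morphIter μ a k).length → (morphIter μ a k)[n]? = some (y n)) ∧
  (∀ N, ∃ k, N < (morphIter μ a k).length)

/-- The (partial) transition function `δ_μ` of the automaton `𝒜_{μ,a}` extended to
words of digits: `δ_μ(b,i) = (μ(b))_i` when `i < |μ(b)|`, undefined (`none`) otherwise. -/
def deltaW {σ : Type*} (μ : σ → List σ) (b : σ) (w : List ℕ) : Option σ :=
  List.foldlM (fun s i => (μ s)[i]?) b w

/-- The directive language `L_{μ,a}` : the words accepted by `𝒜_{μ,a}` (all states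
are final, so acceptance means the run is defined) which do not have `0` as a prefix. -/
def directive {σ : Type*} (μ : σ → List σ) (a : σ) : Set (List ℕ) :=
  {w | (deltaW μ a w).isSome = true ∧ w.head? ≠ some 0}

/-- Genealogical (radix, shortlex) order on words of digits. -/
def GenLtN (u v : List ℕ) : Prop :=
  u.length < v.length ∨ (u.length = v.length ∧ List.Lex (· < ·) u v)

/-- `rep` is the genealogical enumeration of the language `L`. -/
def IsANSEnum (L : Set (List ℕ)) (rep : ℕ → List ℕ) : Prop :=
  (∀ n, rep n ∈ L) ∧ (∀ w ∈ L, ∃ n, rep n = w) ∧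
  (∀ m n, m < n → GenLtN (rep m) (rep n))

/-!
Since `y = μ(y)`, the block `μ(y_m)` occupies the positions `[T m, T (m+1))` of `y`, where
`T m = |μ(y_0 ⋯ y_{m-1})|`. Reading a digit `i` in state `y_m` therefore moves to the letter
of `y` at position `T m + i`, so running `𝒜_{μ,a}` on a word `w` from `a = y_0` tracks a
position `p(w)` in `y` and ends in the letter `y_{p(w)}`. Words of length `k ≥ 1` without a
leading zero land in `[|μ^{k-1}(a)|, |μ^k(a)|)`, and among words of equal length `p` is
lexicographically monotone; hence `p` is strictly monotone for the genealogical order. It is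
onto `ℕ` because every position of `μ^{k+1}(a)` lies in the block of a position of `μ^k(a)`.
Thus `p ∘ rep_S` is an order automorphism of `ℕ`, i.e. `p(rep_S(n)) = n`, and `y_n` is the
state reached on `rep_S(n)`.
-/

theorem Nat.exists_le_lt_succ_of_le_of_lt {f : ℕ → ℕ} {n k : ℕ} (h₀ : f 0 ≤ n)
    (hk : n < f k) : ∃ m < k, f m ≤ n ∧ n < f (m + 1) := by
  induction k with
  | zero => omega
  | succ k ih =>
    by_cases hn : n < f k
    · obtain ⟨m, hm, hfm⟩ := ih hn
      exact ⟨m, by omega, hfm⟩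
    · exact ⟨k, by omega, by omega, hk⟩

theorem applyMorphism_append {σ : Type*} (μ : σ → List σ) (u v : List σ) :
    applyMorphism μ (u ++ v) = applyMorphism μ u ++ applyMorphism μ v := by
  simp [applyMorphism]

theorem applyMorphism_isPrefix {σ : Type*} (μ : σ → List σ) {u v : List σ} (h : u <+: v) :
    applyMorphism μ u <+: applyMorphism μ v := by
  obtain ⟨t, rfl⟩ := h
  exact ⟨applyMorphism μ t, (applyMorphism_append μ u t).symm⟩

theorem morphIter_succ {σ : Type*} (μ : σ → List σ) (a : σ) (k : ℕ) :
    morphIter μ a (k + 1) = applyMorphism μ (morphIter μ a k) :=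
  Function.iterate_succ_apply' _ _ _

theorem Prolongable.morphIter_isPrefix_succ {σ : Type*} {μ : σ → List σ} {a : σ}
    (hprol : Prolongable μ a) (k : ℕ) : morphIter μ a k <+: morphIter μ a (k + 1) := by
  induction k with
  | zero =>
    obtain ⟨u, hu⟩ := hprol
    exact ⟨u, by simp [morphIter, applyMorphism, hu]⟩
  | succ k ih =>
    rw [morphIter_succ, morphIter_succ μ a (k + 1)]
    exact applyMorphism_isPrefix μ ih

theorem Prolongable.monotone_length_morphIter {σ : Type*} {μ : σ → List σ} {a : σ}
    (hprol : Prolongable μ a) : Monotone fun k => (morphIter μ a k).length :=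
  monotone_nat_of_le_succ fun k => (hprol.morphIter_isPrefix_succ k).length_le

theorem deltaW_cons {σ : Type*} (μ : σ → List σ) (b : σ) (i : ℕ) (s : List ℕ) :
    deltaW μ b (i :: s) = (μ b)[i]?.bind fun b' => deltaW μ b' s := by
  simp [deltaW, List.foldlM]

theorem foldl_getD_eq_of_deltaW_eq_some {σ : Type*} [Inhabited σ] (μ : σ → List σ) :
    ∀ (w : List ℕ) (b c : σ), deltaW μ b w = some c → ∀ (hw : w ≠ []),
      (w.dropLast.foldl (fun z i => μ (z.getD i default)) (μ b)).getD (w.getLast hw) default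
        = c
  | [], _, _, _, hw => absurd rfl hw
  | i :: s, b, c, hδ, _ => by
    rw [deltaW_cons] at hδ
    obtain ⟨b', hb', hδ'⟩ := Option.bind_eq_some_iff.mp hδ
    have hgetD : (μ b).getD i default = b' := by rw [List.getD_eq_getElem?_getD, hb']; rfl
    rcases eq_or_ne s [] with rfl | hs
    · cases hδ'
      simpa using hgetD
    · rw [List.dropLast_cons_of_ne_nil hs, List.getLast_cons hs, List.foldl_cons, hgetD]
      exact foldl_getD_eq_of_deltaW_eq_some μ s b' c hδ' hs

namespace PositionAutomaton

variable {σ : Type*} (μ : σ → List σ) (y : ℕ → σ)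

/-- The position in `y = μ(y)` where the block `μ(y m)` starts. -/
def imageStart (m : ℕ) : ℕ := ((List.range m).map fun t => (μ (y t)).length).sum

def step (m i : ℕ) : Option ℕ :=
  if i < (μ (y m)).length then some (imageStart μ y m + i) else none

def run (m : ℕ) (s : List ℕ) : Option ℕ := s.foldlM (step μ y) m

theorem imageStart_zero : imageStart μ y 0 = 0 := rfl

theorem imageStart_succ (m : ℕ) :
    imageStart μ y (m + 1) = imageStart μ y m + (μ (y m)).length := by
  simp [imageStart, List.range_succ]

theorem imageStart_mono : Monotone (imageStart μ y) :=
  monotone_nat_of_le_succ fun m => by rw [imageStart_succ]; omega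

theorem length_applyMorphism_map_range (m : ℕ) :
    (applyMorphism μ ((List.range m).map y)).length = imageStart μ y m := by
  simp [applyMorphism, imageStart, Function.comp_def]

theorem run_nil (m : ℕ) : run μ y m [] = some m := rfl

theorem run_cons (m i : ℕ) (s : List ℕ) :
    run μ y m (i :: s) = (step μ y m i).bind fun p => run μ y p s := rfl

theorem run_append_singleton (m i : ℕ) (s : List ℕ) :
    run μ y m (s ++ [i]) = (run μ y m s).bind fun p => step μ y p i := by
  simp [run, List.foldlM_append]

theorem run_cons_eq_some {m i : ℕ} {s : List ℕ} {p : ℕ} (h : run μ y m (i :: s) = some p) :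
    i < (μ (y m)).length ∧ run μ y (imageStart μ y m + i) s = some p := by
  rw [run_cons, step] at h
  split_ifs at h with hi
  · exact ⟨hi, h⟩
  · cases h

theorem run_lt_run_of_lt {m m' : ℕ} (hm : m < m') :
    ∀ {s t : List ℕ} {p p' : ℕ}, s.length = t.length →
      run μ y m s = some p → run μ y m' t = some p' → p < p'
  | [], [], _, _, _, hp, hp' => by cases hp; cases hp'; exact hm
  | i :: s, j :: t, _, _, hlen, hp, hp' => by
    obtain ⟨hi, hp⟩ := run_cons_eq_some μ y hp
    obtain ⟨-, hp'⟩ := run_cons_eq_some μ y hp'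
    refine run_lt_run_of_lt ?_ (by simpa using hlen) hp hp'
    calc imageStart μ y m + i < imageStart μ y (m + 1) := by rw [imageStart_succ]; omega
      _ ≤ imageStart μ y m' := imageStart_mono μ y hm
      _ ≤ imageStart μ y m' + j := by omega

theorem run_lt_run_of_lex {u v : List ℕ} (hlex : List.Lex (· < ·) u v)
    (hlen : u.length = v.length) {m p q : ℕ} (hp : run μ y m u = some p)
    (hq : run μ y m v = some q) : p < q := by
  induction hlex generalizing m with
  | nil => simp at hlen
  | cons _ ih =>
    exact ih (by simpa using hlen) (run_cons_eq_some μ y hp).2 (run_cons_eq_some μ y hq).2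
  | rel hij =>
    refine run_lt_run_of_lt μ y ?_ (by simpa using hlen)
      (run_cons_eq_some μ y hp).2 (run_cons_eq_some μ y hq).2
    omega

section FixedPoint

variable {μ y} {a : σ} (hfix : IsOmegaFixedPoint μ a y)
include hfix

theorem apply_zero_eq : y 0 = a := by
  simpa [morphIter] using (hfix.1 0 0 (by simp [morphIter])).symm

theorem getElem?_applyMorphism_map_range {m n : ℕ} (hn : n < imageStart μ y m) :
    (applyMorphism μ ((List.range m).map y))[n]? = some (y n) := by
  obtain ⟨k, hk⟩ := hfix.2 m
  have hprefix : (List.range m).map y <+: morphIter μ a k := by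
    refine List.prefix_iff_eq_take.mpr (List.ext_getElem ?_ fun j hj _ => ?_)
    · simp; omega
    · have := hfix.1 k j (by simp at hj; omega)
      simp only [List.getElem_map, List.getElem_range, List.getElem_take]
      exact (List.getElem?_eq_some_iff.mp this).2.symm
  obtain ⟨t, ht⟩ := applyMorphism_isPrefix μ hprefix
  have hlen : n < (applyMorphism μ ((List.range m).map y)).length := by
    rwa [length_applyMorphism_map_range]
  have hy := hfix.1 (k + 1) n (by rw [morphIter_succ, ← ht]; simp; omega)
  rwa [morphIter_succ, ← ht, List.getElem?_append_left hlen] at hy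

theorem getElem?_eq_map_step (m i : ℕ) : (μ (y m))[i]? = (step μ y m i).map y := by
  have hblock : applyMorphism μ ((List.range (m + 1)).map y)
      = applyMorphism μ ((List.range m).map y) ++ μ (y m) := by
    simp [List.range_succ, applyMorphism]
  unfold step
  split_ifs with hi
  · have hy := getElem?_applyMorphism_map_range hfix
      (show imageStart μ y m + i < imageStart μ y (m + 1) by rw [imageStart_succ]; omega)
    rwa [hblock, List.getElem?_append_right (by rw [length_applyMorphism_map_range]; omega),
      length_applyMorphism_map_range, Nat.add_sub_cancel_left] at hy
  · exact List.getElem?_eq_none (by omega)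

theorem deltaW_eq_map_run : ∀ (m : ℕ) (s : List ℕ), deltaW μ (y m) s = (run μ y m s).map y
  | _, [] => rfl
  | m, i :: s => by
    rw [deltaW_cons, run_cons, getElem?_eq_map_step hfix]
    cases step μ y m i <;> simp [deltaW_eq_map_run]

theorem morphIter_eq_map_range (k : ℕ) :
    morphIter μ a k = (List.range (morphIter μ a k).length).map y :=
  List.ext_getElem (by simp) fun n hn _ => by
    simpa using (List.getElem?_eq_some_iff.mp (hfix.1 k n hn)).2

theorem length_morphIter_succ (k : ℕ) :
    (morphIter μ a (k + 1)).length = imageStart μ y (morphIter μ a k).length := by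
  rw [morphIter_succ, morphIter_eq_map_range hfix k, length_applyMorphism_map_range,
    List.length_map, List.length_range]

theorem run_lt_length_morphIter :
    ∀ {m k : ℕ} {s : List ℕ} {p : ℕ}, m < (morphIter μ a k).length →
      run μ y m s = some p → p < (morphIter μ a (k + s.length)).length
  | _, _, [], _, hm, hp => by cases hp; exact hm
  | m, k, i :: s, p, hm, hp => by
    obtain ⟨hi, hp⟩ := run_cons_eq_some μ y hp
    have hnext : imageStart μ y m + i < (morphIter μ a (k + 1)).length :=
      calc imageStart μ y m + i < imageStart μ y (m + 1) := by rw [imageStart_succ]; omega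
        _ ≤ _ := by rw [length_morphIter_succ hfix]; exact imageStart_mono μ y hm
    simpa [Nat.add_right_comm, Nat.add_assoc] using run_lt_length_morphIter hnext hp

theorem length_morphIter_le_run :
    ∀ {m k : ℕ} {s : List ℕ} {p : ℕ}, (morphIter μ a k).length ≤ m →
      run μ y m s = some p → (morphIter μ a (k + s.length)).length ≤ p
  | _, _, [], _, hm, hp => by cases hp; exact hm
  | m, k, i :: s, p, hm, hp => by
    have hnext : (morphIter μ a (k + 1)).length ≤ imageStart μ y m + i := by
      rw [length_morphIter_succ hfix]
      exact (imageStart_mono μ y hm).trans (Nat.le_add_right _ _)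
    simpa [Nat.add_right_comm, Nat.add_assoc] using
      length_morphIter_le_run hnext (run_cons_eq_some μ y hp).2

theorem mem_directive_iff {w : List ℕ} :
    w ∈ directive μ a ↔ (run μ y 0 w).isSome ∧ w.head? ≠ some 0 := by
  rw [directive, Set.mem_ofPred_eq, ← apply_zero_eq hfix, deltaW_eq_map_run hfix,
    Option.isSome_map]

theorem exists_run_eq : ∀ {ℓ n : ℕ}, n < (morphIter μ a ℓ).length →
    ∃ w : List ℕ, w.head? ≠ some 0 ∧ run μ y 0 w = some n
  | 0, n, hn => ⟨[], by simp, by simp [morphIter] at hn; simp [hn, run_nil]⟩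
  | ℓ + 1, n, hn => by
    by_cases hlt : n < (morphIter μ a ℓ).length
    · exact exists_run_eq hlt
    rcases eq_or_ne n 0 with rfl | hn0
    · exact ⟨[], by simp, rfl⟩
    rw [length_morphIter_succ hfix] at hn
    obtain ⟨m, hm, hmn, hnm⟩ :=
      Nat.exists_le_lt_succ_of_le_of_lt (f := imageStart μ y) (Nat.zero_le n) hn
    obtain ⟨w, hw, hrun⟩ := exists_run_eq hm
    rw [imageStart_succ] at hnm
    refine ⟨w ++ [n - imageStart μ y m], ?_, ?_⟩
    · rcases eq_or_ne w [] with rfl | hw'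
      · cases hrun
        simpa [imageStart_zero] using hn0
      · obtain ⟨j, t, rfl⟩ := List.exists_cons_of_ne_nil hw'
        simpa using hw
    · rw [run_append_singleton, hrun, Option.bind_some, step, if_pos (by omega)]
      congr 1
      omega

end FixedPoint

theorem run_lt_run_of_genLtN (hprol : Prolongable μ a) (hfix : IsOmegaFixedPoint μ a y)
    {u v : List ℕ} (hv : v.head? ≠ some 0) (huv : GenLtN u v) {p q : ℕ}
    (hp : run μ y 0 u = some p) (hq : run μ y 0 v = some q) : p < q := by
  rcases huv with hlen | ⟨hlen, hlex⟩
  · obtain ⟨j, t, rfl⟩ :=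
      List.exists_cons_of_ne_nil (List.ne_nil_of_length_pos (show 0 < v.length by omega))
    obtain ⟨-, hq⟩ := run_cons_eq_some μ y hq
    have hj : (morphIter μ a 0).length ≤ imageStart μ y 0 + j := by
      simp only [morphIter, Function.iterate_zero, id, List.length_singleton, imageStart_zero]
      simp only [List.head?_cons, ne_eq, Option.some.injEq] at hv
      omega
    calc p < (morphIter μ a (0 + u.length)).length :=
          run_lt_length_morphIter hfix (by simp [morphIter]) hp
      _ ≤ (morphIter μ a (0 + t.length)).length :=
          hprol.monotone_length_morphIter (by simp at hlen; omega)
      _ ≤ q := length_morphIter_le_run hfix hj hq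
  · exact run_lt_run_of_lex μ y hlex hlen hp hq

theorem run_rep_eq (hprol : Prolongable μ a) (hfix : IsOmegaFixedPoint μ a y)
    {rep : ℕ → List ℕ} (hrep : IsANSEnum (directive μ a) rep) (n : ℕ) :
    run μ y 0 (rep n) = some n := by
  choose f hf using fun n =>
    Option.isSome_iff_exists.mp ((mem_directive_iff hfix).mp (hrep.1 n)).1
  have hmono : StrictMono f := fun m n hmn =>
    run_lt_run_of_genLtN μ y hprol hfix ((mem_directive_iff hfix).mp (hrep.1 n)).2
      (hrep.2.2 m n hmn) (hf m) (hf n)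
  have hsurj : Function.Surjective f := fun n => by
    obtain ⟨ℓ, hℓ⟩ := hfix.2 n
    obtain ⟨w, hw, hrun⟩ := exists_run_eq hfix hℓ
    obtain ⟨m, rfl⟩ := hrep.2.1 w ((mem_directive_iff hfix).mpr ⟨by simp [hrun], hw⟩)
    exact ⟨m, Option.some.inj ((hf m).symm.trans hrun)⟩
  have hid : f n = n :=
    congrArg (· n) (Subsingleton.elim (hmono.orderIsoOfSurjective f hsurj) (OrderIso.refl ℕ))
  rw [hf, hid]

theorem deltaW_rep_eq (hprol : Prolongable μ a) (hfix : IsOmegaFixedPoint μ a y)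
    {rep : ℕ → List ℕ} (hrep : IsANSEnum (directive μ a) rep) (n : ℕ) :
    deltaW μ a (rep n) = some (y n) := by
  rw [← apply_zero_eq hfix, deltaW_eq_map_run hfix, run_rep_eq μ y hprol hfix hrep n,
    Option.map_some]

end PositionAutomaton

/-- Lemma `cor:dir`. Let `n ≥ 1` and write `rep_S(n) = w₀w₁⋯w_ℓ`.
Defining `z₀ := μ(a)` and `z_{j+1} := μ((z_j)_{w_j})` for `j = 0,…,ℓ−1` (here realized
by folding over `w₀⋯w_{ℓ−1}`, i.e. over `(rep_S(n)).dropLast`), one has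
`y_n = (z_ℓ)_{w_ℓ}`. -/
theorem stmt_4 {σ : Type*} [Inhabited σ] (μ : σ → List σ) (a : σ) (y : ℕ → σ)
    (hprol : Prolongable μ a) (hfix : IsOmegaFixedPoint μ a y)
    (rep : ℕ → List ℕ) (hrep : IsANSEnum (directive μ a) rep) :
    ∀ n, 1 ≤ n → ∀ (hne : rep n ≠ []),
      y n = (((rep n).dropLast.foldl (fun z i => μ (z.getD i default)) (μ a)).getD
              ((rep n).getLast hne) default) := fun n _ hne =>
  (foldl_getD_eq_of_deltaW_eq_some μ (rep n) a (y n)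
    (PositionAutomaton.deltaW_rep_eq μ y hprol hfix hrep n) hne).symm
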